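/- arXiv:1109.5316 — 2 statements merged into one kernel-verified Lean document; each statement's English description precedes it below -/
import Mathlib

section
/- Suppose 𝒢 = {Ĝ} and ℋ = {Ĥ} are singletons of integrable nonnegative random variables, let x > 0, and let â ≥ 0 satisfy 𝔼[Ĥ·1_{{Ĝ ≥ âĤ}}] > x > 𝔼[Ĥ·1_{{Ĝ > âĤ}}]. Define the constant B₀ := (x − 𝔼[Ĥ·1_{{Ĝ > âĤ}}]) / 𝔼[Ĥ·1_{{Ĝ = âĤ}}]. Then B₀ ∈ (0,1), the randomized test X̂ := 1_{{Ĝ > âĤ}} + B₀·1_{{Ĝ = âĤ}} satisfies 𝔼[ĤX̂] = x (so X̂ ∈ 𝒳ₓ), and X̂ is optimal: 𝔼[ĜX̂] = V(x). -/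
open MeasureTheory

namespace QH

variable {Ω : Type*} [MeasurableSpace Ω]

/-- The set of nonnegative measurable random variables. -/
def L0plus (Ω : Type*) [MeasurableSpace Ω] : Set (Ω → ℝ) :=
  {f | Measurable f ∧ ∀ ω, 0 ≤ f ω}

/-- A randomized test: a measurable function with values in `[0,1]`. -/
def IsRandTest (X : Ω → ℝ) : Prop :=
  Measurable X ∧ ∀ ω, X ω ∈ Set.Icc (0 : ℝ) 1

/-- The feasible randomized tests for significance level `x` and null collection `H`. -/
def Tests (μ : Measure Ω) (H : Set (Ω → ℝ)) (x : ℝ) : Set (Ω → ℝ) :=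
  {X | IsRandTest X ∧ ∀ h ∈ H, ∫ ω, h ω * X ω ∂μ ≤ x}

/-- The worst-case power of a test `X` over the alternative collection `G`. -/
noncomputable def powerInf (μ : Measure Ω) (G : Set (Ω → ℝ)) (X : Ω → ℝ) : ℝ :=
  sInf ((fun g => ∫ ω, g ω * X ω ∂μ) '' G)

/-- The value of the randomized composite hypothesis testing problem. -/
noncomputable def V (μ : Measure Ω) (G H : Set (Ω → ℝ)) (x : ℝ) : ℝ :=
  sSup (powerInf μ G '' Tests μ H x)

/-- The value of the pure composite hypothesis testing problem. -/
noncomputable def V1 (μ : Measure Ω) (G H : Set (Ω → ℝ)) (x : ℝ) : ℝ :=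
  sSup (powerInf μ G '' {X ∈ Tests μ H x | ∀ ω, X ω = 0 ∨ X ω = 1})

/-- The set `ℋₓ` of nonnegative random variables that satisfy the budget
constraint against every feasible randomized test. -/
def HxSet (μ : Measure Ω) (H : Set (Ω → ℝ)) (x : ℝ) : Set (Ω → ℝ) :=
  {h | h ∈ L0plus Ω ∧ ∀ X ∈ Tests μ H x, ∫ ω, h ω * X ω ∂μ ≤ x}

/-- A set of (nonnegative) random variables is closed under convergence in probability,
as a subset of `L⁰⁺`. -/
def ClosedInProb (μ : Measure Ω) (S : Set (Ω → ℝ)) : Prop :=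
  ∀ (f : ℕ → Ω → ℝ) (g : Ω → ℝ), (∀ n, f n ∈ S) → g ∈ L0plus Ω →
    TendstoInMeasure μ f Filter.atTop g → g ∈ S

/-- The closure of a set of random variables under convergence in probability. -/
def clProb (μ : Measure Ω) (S : Set (Ω → ℝ)) : Set (Ω → ℝ) :=
  {g | ∃ f : ℕ → Ω → ℝ, (∀ n, f n ∈ S) ∧ TendstoInMeasure μ f Filter.atTop g}

/-- Assumption (A1): `𝒢, ℋ ⊆ L⁰⁺`, `sup_{X ∈ 𝒢∪ℋ} 𝔼[X] < ∞`, and `𝒢` is convex and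
closed under convergence in probability. -/
def A1 (μ : Measure Ω) (G H : Set (Ω → ℝ)) : Prop :=
  G ⊆ L0plus Ω ∧ H ⊆ L0plus Ω ∧ (∀ f ∈ G ∪ H, Integrable f μ) ∧
  BddAbove ((fun f => ∫ ω, f ω ∂μ) '' (G ∪ H)) ∧
  Convex ℝ G ∧ ClosedInProb μ G

/-- The smallest σ-algebra making every random variable in `G ∪ H` measurable. -/
def sigmaGen (G H : Set (Ω → ℝ)) : MeasurableSpace Ω :=
  ⨆ f ∈ G ∪ H, MeasurableSpace.comap f inferInstance

/-- The Neyman–Pearson conditions at level `x` for the tuple `(Ĝ, Ĥ, â, X̂, B)`. -/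
def NPconds (μ : Measure Ω) (G H : Set (Ω → ℝ)) (x : ℝ)
    (Ghat Hhat : Ω → ℝ) (ahat : ℝ) (Xhat B : Ω → ℝ) : Prop :=
  Ghat ∈ G ∧ Hhat ∈ clProb μ (convexHull ℝ H) ∧ 0 ≤ ahat ∧ Xhat ∈ Tests μ H x ∧
  Measurable B ∧ (∀ ω, B ω ∈ Set.Icc (0 : ℝ) 1) ∧
  (∀ ω, Xhat ω = (if ahat * Hhat ω < Ghat ω then 1 else 0)
      + B ω * (if Ghat ω = ahat * Hhat ω then 1 else 0)) ∧
  (∀ h ∈ H, ∫ ω, h ω * Xhat ω ∂μ ≤ ∫ ω, Hhat ω * Xhat ω ∂μ) ∧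
  (∫ ω, Hhat ω * Xhat ω ∂μ = x) ∧
  (∀ g ∈ G, ∫ ω, Ghat ω * Xhat ω ∂μ ≤ ∫ ω, g ω * Xhat ω ∂μ)

end QH

/-!
Where `Ĝ > âĤ` the test `X̂` rejects outright, where `Ĝ < âĤ` it accepts, and on the tie set
`Ĝ = âĤ` it randomizes with the constant `B₀` that uses up the remaining budget exactly. Hence
`(Ĝ - âĤ)(X̂ - X) ≥ 0` pointwise for every randomized test `X`; integrating and using
`𝔼[ĤX] ≤ x = 𝔼[ĤX̂]` and `â ≥ 0` gives `𝔼[ĜX] ≤ 𝔼[ĜX̂]` (Neyman–Pearson). With singleton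
`𝒢` the worst-case power is just `𝔼[ĜX]`, so `V(x)` is attained at `X̂`.
-/

open Set

theorem ite_le_eq_ite_lt_add_ite_eq {α R : Type*} [LinearOrder α] [AddMonoidWithOne R]
    (a b : α) :
    (if a ≤ b then (1 : R) else 0) = (if a < b then 1 else 0) + (if b = a then 1 else 0) := by
  rcases lt_trichotomy a b with h | rfl | h
  · simp [h.le, h.ne', h.not_ge]
  · simp
  · simp [h.not_ge, h.not_gt, h.ne]

section

variable {Ω : Type*} [MeasurableSpace Ω] {μ : Measure Ω}

theorem MeasureTheory.Integrable.mul_of_mem_Icc {f X : Ω → ℝ} (hf : Integrable f μ)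
    (hX : AEStronglyMeasurable X μ) (hX01 : ∀ ω, X ω ∈ Icc (0 : ℝ) 1) :
    Integrable (fun ω => f ω * X ω) μ :=
  hf.mul_bdd hX <| ae_of_all _ fun ω => by
    rw [Real.norm_eq_abs, abs_le]
    exact ⟨by linarith [(hX01 ω).1], (hX01 ω).2⟩

theorem MeasureTheory.Integrable.mul_ite {f : Ω → ℝ} {p : Ω → Prop} [DecidablePred p]
    (hf : Integrable f μ) (hp : MeasurableSet {ω | p ω}) :
    Integrable (fun ω => f ω * if p ω then (1 : ℝ) else 0) μ :=
  hf.mul_of_mem_Icc (Measurable.ite hp measurable_const measurable_const).aestronglyMeasurable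
    fun ω => by split_ifs <;> simp

end

namespace QH

variable {Ω : Type*}

noncomputable def npTest (G H : Ω → ℝ) (a b : ℝ) : Ω → ℝ := fun ω =>
  (if a * H ω < G ω then 1 else 0) + b * (if G ω = a * H ω then 1 else 0)

variable {G H : Ω → ℝ} {a b : ℝ}

theorem npTest_of_lt {ω : Ω} (h : a * H ω < G ω) : npTest G H a b ω = 1 := by
  simp [npTest, h, h.ne']

theorem npTest_of_eq {ω : Ω} (h : G ω = a * H ω) : npTest G H a b ω = b := by
  simp [npTest, h]

theorem npTest_of_gt {ω : Ω} (h : G ω < a * H ω) : npTest G H a b ω = 0 := by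
  simp [npTest, h.not_gt, h.ne]

theorem npTest_mem_Icc (hb : b ∈ Icc (0 : ℝ) 1) (ω : Ω) : npTest G H a b ω ∈ Icc (0 : ℝ) 1 := by
  rcases lt_trichotomy (a * H ω) (G ω) with h | h | h
  · simp [npTest_of_lt h]
  · rwa [npTest_of_eq h.symm]
  · simp [npTest_of_gt h]

variable [MeasurableSpace Ω] {μ : Measure Ω}

theorem IsRandTest.integrable_mul {X F : Ω → ℝ} (hX : IsRandTest X) (hF : Integrable F μ) :
    Integrable (fun ω => F ω * X ω) μ :=
  hF.mul_of_mem_Icc hX.1.aestronglyMeasurable hX.2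

theorem measurable_npTest (hG : Measurable G) (hH : Measurable H) :
    Measurable (npTest G H a b) :=
  (Measurable.ite (measurableSet_lt (hH.const_mul a) hG) measurable_const measurable_const).add
    (measurable_const.mul
      (Measurable.ite (measurableSet_eq_fun hG (hH.const_mul a)) measurable_const
        measurable_const))

theorem isRandTest_npTest (hG : Measurable G) (hH : Measurable H) (hb : b ∈ Icc (0 : ℝ) 1) :
    IsRandTest (npTest G H a b) :=
  ⟨measurable_npTest hG hH, npTest_mem_Icc hb⟩

theorem integral_mul_npTest {F : Ω → ℝ} (hF : Integrable F μ) (hG : Measurable G)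
    (hH : Measurable H) :
    ∫ ω, F ω * npTest G H a b ω ∂μ =
      (∫ ω, F ω * (if a * H ω < G ω then (1 : ℝ) else 0) ∂μ) +
        b * ∫ ω, F ω * (if G ω = a * H ω then (1 : ℝ) else 0) ∂μ := by
  have hlt := hF.mul_ite (measurableSet_lt (hH.const_mul a) hG)
  have heq := hF.mul_ite (measurableSet_eq_fun hG (hH.const_mul a))
  rw [← integral_const_mul, ← integral_add hlt (heq.const_mul b)]
  congr 1 with ω
  simp only [npTest]
  ring

theorem integral_mul_ite_le {F : Ω → ℝ} (hF : Integrable F μ) (hG : Measurable G)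
    (hH : Measurable H) :
    ∫ ω, F ω * (if a * H ω ≤ G ω then (1 : ℝ) else 0) ∂μ =
      (∫ ω, F ω * (if a * H ω < G ω then (1 : ℝ) else 0) ∂μ) +
        ∫ ω, F ω * (if G ω = a * H ω then (1 : ℝ) else 0) ∂μ := by
  rw [← integral_add (hF.mul_ite (measurableSet_lt (hH.const_mul a) hG))
    (hF.mul_ite (measurableSet_eq_fun hG (hH.const_mul a)))]
  simp_rw [ite_le_eq_ite_lt_add_ite_eq, mul_add]

/-- The Neyman–Pearson lemma, in Lagrangian form. -/
theorem integral_sub_mul_le_npTest (hGi : Integrable G μ) (hHi : Integrable H μ)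
    (hG : Measurable G) (hH : Measurable H) (hb : b ∈ Icc (0 : ℝ) 1) {X : Ω → ℝ}
    (hX : IsRandTest X) :
    (∫ ω, G ω * X ω ∂μ) - a * ∫ ω, H ω * X ω ∂μ ≤
      (∫ ω, G ω * npTest G H a b ω ∂μ) - a * ∫ ω, H ω * npTest G H a b ω ∂μ := by
  have hT := isRandTest_npTest (a := a) hG hH hb
  have pointwise : ∀ ω, (G ω - a * H ω) * X ω ≤ (G ω - a * H ω) * npTest G H a b ω := by
    intro ω
    rcases lt_trichotomy (a * H ω) (G ω) with h | h | h
    · rw [npTest_of_lt h]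
      exact mul_le_mul_of_nonneg_left (hX.2 ω).2 (by linarith)
    · simp [h]
    · rw [npTest_of_gt h]
      nlinarith [(hX.2 ω).1]
  have expand {Y : Ω → ℝ} (hY : IsRandTest Y) :
      ∫ ω, (G ω - a * H ω) * Y ω ∂μ = (∫ ω, G ω * Y ω ∂μ) - a * ∫ ω, H ω * Y ω ∂μ := by
    simp_rw [sub_mul, mul_assoc]
    rw [integral_sub (hY.integrable_mul hGi) ((hY.integrable_mul hHi).const_mul a),
      integral_const_mul]
  have hGaH : Integrable (fun ω => G ω - a * H ω) μ := hGi.sub (hHi.const_mul a)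
  rw [← expand hX, ← expand hT]
  exact integral_mono (hX.integrable_mul hGaH) (hT.integrable_mul hGaH) pointwise

theorem powerInf_singleton (X : Ω → ℝ) : powerInf μ {G} X = ∫ ω, G ω * X ω ∂μ := by
  rw [powerInf, image_singleton, csInf_singleton]

theorem V_singleton_eq_of_forall_le {Hs : Set (Ω → ℝ)} {x : ℝ} {Xhat : Ω → ℝ}
    (hXhat : Xhat ∈ Tests μ Hs x)
    (hle : ∀ X ∈ Tests μ Hs x, ∫ ω, G ω * X ω ∂μ ≤ ∫ ω, G ω * Xhat ω ∂μ) :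
    V μ {G} Hs x = ∫ ω, G ω * Xhat ω ∂μ := by
  refine IsGreatest.csSup_eq ⟨⟨Xhat, hXhat, powerInf_singleton Xhat⟩, ?_⟩
  rintro _ ⟨X, hX, rfl⟩
  rw [powerInf_singleton]
  exact hle X hX

theorem V_singleton_eq_integral_npTest (hGi : Integrable G μ) (hHi : Integrable H μ)
    (hG : Measurable G) (hH : Measurable H) (ha : 0 ≤ a) (hb : b ∈ Icc (0 : ℝ) 1) {x : ℝ}
    (hx : ∫ ω, H ω * npTest G H a b ω ∂μ = x) :
    npTest G H a b ∈ Tests μ {H} x ∧ V μ {G} {H} x = ∫ ω, G ω * npTest G H a b ω ∂μ := by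
  have hmem : npTest G H a b ∈ Tests μ {H} x :=
    ⟨isRandTest_npTest hG hH hb, by rintro _ rfl; exact hx.le⟩
  refine ⟨hmem, V_singleton_eq_of_forall_le hmem fun X hX => ?_⟩
  have hbudget : ∫ ω, H ω * X ω ∂μ ≤ x := hX.2 H rfl
  have := integral_sub_mul_le_npTest (μ := μ) (a := a) hGi hHi hG hH hb hX.1
  nlinarith [mul_le_mul_of_nonneg_left hbudget ha]

end QH

theorem stmt_9_general {Ω : Type*} [MeasurableSpace Ω] (μ : MeasureTheory.Measure Ω)
    (Ghat Hhat : Ω → ℝ)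
    (hGm : Measurable Ghat) (hGi : MeasureTheory.Integrable Ghat μ)
    (hHm : Measurable Hhat) (hHi : MeasureTheory.Integrable Hhat μ)
    (x : ℝ) (ahat : ℝ) (ha : 0 ≤ ahat)
    (hGe : x < ∫ ω, Hhat ω * (if ahat * Hhat ω ≤ Ghat ω then (1 : ℝ) else 0) ∂μ)
    (hGt : ∫ ω, Hhat ω * (if ahat * Hhat ω < Ghat ω then (1 : ℝ) else 0) ∂μ < x) :
    let B0 : ℝ := (x - ∫ ω, Hhat ω * (if ahat * Hhat ω < Ghat ω then (1 : ℝ) else 0) ∂μ) /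
      (∫ ω, Hhat ω * (if Ghat ω = ahat * Hhat ω then (1 : ℝ) else 0) ∂μ)
    let Xhat : Ω → ℝ := fun ω => (if ahat * Hhat ω < Ghat ω then 1 else 0)
      + B0 * (if Ghat ω = ahat * Hhat ω then 1 else 0)
    0 < B0 ∧ B0 < 1 ∧ (∫ ω, Hhat ω * Xhat ω ∂μ = x) ∧
      Xhat ∈ QH.Tests μ {Hhat} x ∧
      (∫ ω, Ghat ω * Xhat ω ∂μ = QH.V μ {Ghat} {Hhat} x) := by
  intro B0 Xhat
  rw [QH.integral_mul_ite_le hHi hGm hHm] at hGe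
  set Ieq := ∫ ω, Hhat ω * (if Ghat ω = ahat * Hhat ω then (1 : ℝ) else 0) ∂μ
  have hIeq : 0 < Ieq := by linarith
  have hB0pos : 0 < B0 := div_pos (by linarith) hIeq
  have hB0lt : B0 < 1 := (div_lt_one hIeq).2 (by linarith)
  have hHX : ∫ ω, Hhat ω * QH.npTest Ghat Hhat ahat B0 ω ∂μ = x := by
    rw [QH.integral_mul_npTest hHi hGm hHm, div_mul_cancel₀ _ hIeq.ne']
    ring
  obtain ⟨hmem, hV⟩ :=
    QH.V_singleton_eq_integral_npTest hGi hHi hGm hHm ha ⟨hB0pos.le, hB0lt.le⟩ hHX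
  exact ⟨hB0pos, hB0lt, hHX, hmem, hV.symm⟩

/-- For singletons `𝒢 = {Ĝ}`, `ℋ = {Ĥ}` of integrable nonnegative random
variables, `x > 0`, and `â ≥ 0` with `𝔼[Ĥ·1_{Ĝ ≥ âĤ}] > x > 𝔼[Ĥ·1_{Ĝ > âĤ}]`, the
constant `B₀ := (x − 𝔼[Ĥ·1_{Ĝ > âĤ}])/𝔼[Ĥ·1_{Ĝ = âĤ}]` lies in `(0,1)`, and the
randomized test `X̂ := 1_{Ĝ > âĤ} + B₀·1_{Ĝ = âĤ}` satisfies `𝔼[ĤX̂] = x`, belongs to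
`𝒳ₓ`, and is optimal: `𝔼[ĜX̂] = V(x)`. -/
theorem stmt_9 {Ω : Type*} [MeasurableSpace Ω] (μ : MeasureTheory.Measure Ω)
    [MeasureTheory.IsProbabilityMeasure μ]
    (Ghat Hhat : Ω → ℝ)
    (hGm : Measurable Ghat) (hGpos : ∀ ω, 0 ≤ Ghat ω) (hGi : MeasureTheory.Integrable Ghat μ)
    (hHm : Measurable Hhat) (hHpos : ∀ ω, 0 ≤ Hhat ω) (hHi : MeasureTheory.Integrable Hhat μ)
    (x : ℝ) (hx : 0 < x) (ahat : ℝ) (ha : 0 ≤ ahat)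
    (hGe : x < ∫ ω, Hhat ω * (if ahat * Hhat ω ≤ Ghat ω then (1 : ℝ) else 0) ∂μ)
    (hGt : ∫ ω, Hhat ω * (if ahat * Hhat ω < Ghat ω then (1 : ℝ) else 0) ∂μ < x) :
    let B0 : ℝ := (x - ∫ ω, Hhat ω * (if ahat * Hhat ω < Ghat ω then (1 : ℝ) else 0) ∂μ) /
      (∫ ω, Hhat ω * (if Ghat ω = ahat * Hhat ω then (1 : ℝ) else 0) ∂μ)
    let Xhat : Ω → ℝ := fun ω => (if ahat * Hhat ω < Ghat ω then 1 else 0)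
      + B0 * (if Ghat ω = ahat * Hhat ω then 1 else 0)
    0 < B0 ∧ B0 < 1 ∧ (∫ ω, Hhat ω * Xhat ω ∂μ = x) ∧
      Xhat ∈ QH.Tests μ {Hhat} x ∧
      (∫ ω, Ghat ω * Xhat ω ∂μ = QH.V μ {Ghat} {Hhat} x) :=
  stmt_9_general μ Ghat Hhat hGm hGi hHm hHi x ahat ha hGe hGt
end

section
/- Let Ω = {ω₁, ω₂} with ℙ{ω₁} = ℙ{ω₂} = 1/2, let 𝒢 = {G} with G(ω₁) = G(ω₂) = 2, and let ℋ = {H_t : t ∈ [0,1]} where H_t(ω₁) = 6 − 4t and H_t(ω₂) = 2 + 2t (the segment joining (2,4) and (6,2)). Then V(x) = 3x/5 for 0 ≤ x < 5/2, V(x) = x/3 + 2/3 for 5/2 ≤ x < 4, and V(x) = 2 for x ≥ 4; while V₁(x) = 0 for 0 ≤ x < 2, V₁(x) = 1 for 2 ≤ x < 4, and V₁(x) = 2 for x ≥ 4. Moreover the function W(x) := min(x/2, 2) is concave and satisfies W(x) ≥ V₁(x) for all x ≥ 0, yet W(2) = 1 < 6/5 = V(2); hence V is not the smallest concave majorant of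 V₁. -/
open MeasureTheory

/-- The uniform probability measure on the two-point space `Ω = {ω₁, ω₂}` (here `Bool`,
with `ω₁` encoded as `false` and `ω₂` as `true`). -/
noncomputable def QH.muTwo : MeasureTheory.Measure Bool :=
  (1 / 2 : ENNReal) • (MeasureTheory.Measure.dirac false + MeasureTheory.Measure.dirac true)

/-!
Both value functions reduce to optimisation over the pairs `(a, b) = (X ω₁, X ω₂)`.
The power of a test against `G = (2, 2)` is `a + b`, and since `𝔼[H_t X]` is affine in `t`,
the budget constraints over the whole segment `ℋ` amount to those at its endpoints,
`3a + b ≤ x` and `a + 2b ≤ x`. The randomized value is then a linear programme in `(a, b)`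
and the pure one a maximum over the four vertices of the unit square; each optimum is
certified by a feasible pair and a linear combination of the constraints.
-/

open Set

namespace QH

def altTwo : Set (Bool → ℝ) := {fun _ => 2}

def nullH (t : ℝ) : Bool → ℝ := fun b => if b then 2 + 2 * t else 6 - 4 * t

def nullSegment : Set (Bool → ℝ) := {h | ∃ t ∈ Icc (0 : ℝ) 1, h = nullH t}

/-- Feasibility at level `x` of the test taking the value `a` at `ω₁ = false` and `b` at
`ω₂ = true`; the last two constraints are the budgets against `H₀` and `H₁`. -/
def Feasible (x a b : ℝ) : Prop :=
  a ∈ Icc (0 : ℝ) 1 ∧ b ∈ Icc (0 : ℝ) 1 ∧ 3 * a + b ≤ x ∧ a + 2 * b ≤ x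

lemma integral_muTwo (f : Bool → ℝ) : ∫ ω, f ω ∂muTwo = (f false + f true) / 2 := by
  rw [muTwo, integral_smul_measure, integral_add_measure .of_finite .of_finite,
    integral_dirac, integral_dirac]
  simp only [smul_eq_mul, ENNReal.toReal_div, ENNReal.toReal_one, ENNReal.toReal_ofNat]
  ring

lemma powerInf_altTwo (X : Bool → ℝ) : powerInf muTwo altTwo X = X false + X true := by
  rw [powerInf, altTwo, image_singleton, csInf_singleton, integral_muTwo]
  ring

lemma integral_nullH_mul (t : ℝ) (X : Bool → ℝ) :
    ∫ ω, nullH t ω * X ω ∂muTwo =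
      (1 - t) * (3 * X false + X true) + t * (X false + 2 * X true) := by
  rw [integral_muTwo]
  simp only [nullH, Bool.false_eq_true, if_false, if_true]
  ring

lemma mem_tests_iff {x : ℝ} {X : Bool → ℝ} :
    X ∈ Tests muTwo nullSegment x ↔ Feasible x (X false) (X true) := by
  constructor
  · rintro ⟨⟨-, hX⟩, hbudget⟩
    have h₀ := hbudget (nullH 0) ⟨0, by norm_num, rfl⟩
    have h₁ := hbudget (nullH 1) ⟨1, by norm_num, rfl⟩
    rw [integral_nullH_mul] at h₀ h₁
    exact ⟨hX false, hX true, by linarith, by linarith⟩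
  · rintro ⟨ha, hb, h₀, h₁⟩
    refine ⟨⟨measurable_of_countable X, Bool.forall_bool.2 ⟨ha, hb⟩⟩, ?_⟩
    rintro _ ⟨t, ⟨ht₀, ht₁⟩, rfl⟩
    rw [integral_nullH_mul]
    linarith [mul_le_mul_of_nonneg_left h₀ (sub_nonneg.2 ht₁), mul_le_mul_of_nonneg_left h₁ ht₀]

lemma exists_test_of_feasible {x a b : ℝ} (hab : Feasible x a b) :
    ∃ X ∈ Tests muTwo nullSegment x, X false = a ∧ X true = b :=
  ⟨fun ω => if ω then b else a, mem_tests_iff.2 hab, rfl, rfl⟩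

lemma V_eq_of_feasible {x a b : ℝ} (hab : Feasible x a b)
    (hmax : ∀ a' b', Feasible x a' b' → a' + b' ≤ a + b) :
    V muTwo altTwo nullSegment x = a + b := by
  refine IsGreatest.csSup_eq ⟨?_, ?_⟩
  · obtain ⟨X, hX, rfl, rfl⟩ := exists_test_of_feasible hab
    exact ⟨X, hX, powerInf_altTwo X⟩
  · rintro _ ⟨X, hX, rfl⟩
    rw [powerInf_altTwo]
    exact hmax _ _ (mem_tests_iff.1 hX)

lemma V1_eq_of_feasible {x a b : ℝ} (hab : Feasible x a b) (ha : a = 0 ∨ a = 1)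
    (hb : b = 0 ∨ b = 1)
    (hmax : ∀ a' b', (a' = 0 ∨ a' = 1) → (b' = 0 ∨ b' = 1) → 3 * a' + b' ≤ x →
      a' + 2 * b' ≤ x → a' + b' ≤ a + b) :
    V1 muTwo altTwo nullSegment x = a + b := by
  refine IsGreatest.csSup_eq ⟨?_, ?_⟩
  · obtain ⟨X, hX, rfl, rfl⟩ := exists_test_of_feasible hab
    exact ⟨X, ⟨hX, Bool.forall_bool.2 ⟨ha, hb⟩⟩, powerInf_altTwo X⟩
  · rintro _ ⟨X, ⟨hX, hpure⟩, rfl⟩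
    obtain ⟨-, -, h₀, h₁⟩ := mem_tests_iff.1 hX
    rw [powerInf_altTwo]
    exact hmax _ _ (hpure false) (hpure true) h₀ h₁

lemma V_of_lt_five_halves {x : ℝ} (hx₀ : 0 ≤ x) (hx : x < 5 / 2) :
    V muTwo altTwo nullSegment x = 3 * x / 5 := by
  rw [V_eq_of_feasible (a := x / 5) (b := 2 * x / 5)
    ⟨⟨by linarith, by linarith⟩, ⟨by linarith, by linarith⟩, by linarith, by linarith⟩
    (fun a b ⟨_, _, h₀, h₁⟩ => by linarith)]
  ring

lemma V_of_mem_Ico {x : ℝ} (hx₀ : 5 / 2 ≤ x) (hx : x < 4) :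
    V muTwo altTwo nullSegment x = x / 3 + 2 / 3 := by
  rw [V_eq_of_feasible (a := (x - 1) / 3) (b := 1)
    ⟨⟨by linarith, by linarith⟩, ⟨by norm_num, le_rfl⟩, by linarith, by linarith⟩
    (fun a b ⟨_, ⟨_, hb⟩, h₀, _⟩ => by linarith)]
  ring

lemma V_of_four_le {x : ℝ} (hx : 4 ≤ x) : V muTwo altTwo nullSegment x = 2 := by
  rw [V_eq_of_feasible (a := 1) (b := 1)
    ⟨⟨zero_le_one, le_rfl⟩, ⟨zero_le_one, le_rfl⟩, by linarith, by linarith⟩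
    (fun a b ⟨⟨_, ha⟩, ⟨_, hb⟩, _⟩ => by linarith)]
  norm_num

lemma V1_of_lt_two {x : ℝ} (hx₀ : 0 ≤ x) (hx : x < 2) : V1 muTwo altTwo nullSegment x = 0 := by
  rw [V1_eq_of_feasible (a := 0) (b := 0)
    ⟨⟨le_rfl, zero_le_one⟩, ⟨le_rfl, zero_le_one⟩, by linarith, by linarith⟩ (.inl rfl) (.inl rfl)
    (by rintro a b (rfl | rfl) (rfl | rfl) h₀ h₁ <;> linarith)]
  norm_num

lemma V1_of_mem_Ico {x : ℝ} (hx₀ : 2 ≤ x) (hx : x < 4) : V1 muTwo altTwo nullSegment x = 1 := by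
  rw [V1_eq_of_feasible (a := 0) (b := 1)
    ⟨⟨le_rfl, zero_le_one⟩, ⟨zero_le_one, le_rfl⟩, by linarith, by linarith⟩ (.inl rfl) (.inr rfl)
    (by rintro a b (rfl | rfl) (rfl | rfl) h₀ h₁ <;> linarith)]
  norm_num

lemma V1_of_four_le {x : ℝ} (hx : 4 ≤ x) : V1 muTwo altTwo nullSegment x = 2 := by
  rw [V1_eq_of_feasible (a := 1) (b := 1)
    ⟨⟨zero_le_one, le_rfl⟩, ⟨zero_le_one, le_rfl⟩, by linarith, by linarith⟩ (.inr rfl) (.inr rfl)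
    (by rintro a b (rfl | rfl) (rfl | rfl) h₀ h₁ <;> linarith)]
  norm_num

lemma V1_le_min {x : ℝ} (hx₀ : 0 ≤ x) : V1 muTwo altTwo nullSegment x ≤ min (x / 2) 2 := by
  rcases lt_or_ge x 2 with hx₂ | hx₂
  · rw [V1_of_lt_two hx₀ hx₂]
    exact le_min (by linarith) (by norm_num)
  rcases lt_or_ge x 4 with hx₄ | hx₄
  · rw [V1_of_mem_Ico hx₂ hx₄]
    exact le_min (by linarith) (by norm_num)
  · rw [V1_of_four_le hx₄]
    exact le_min (by linarith) le_rfl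

end QH

lemma concaveOn_min_half_two : ConcaveOn ℝ Set.univ fun x : ℝ => min (x / 2) 2 :=
  ((LinearMap.concaveOn ((1 / 2 : ℝ) • LinearMap.id) convex_univ).inf
    (concaveOn_const 2 convex_univ)).congr fun x _ => by simp [div_eq_inv_mul]

/-- On `Ω = {ω₁, ω₂}` with `ℙ{ω₁} = ℙ{ω₂} = 1/2`, `𝒢 = {(2,2)}` and
`ℋ` the segment joining `(2,4)` and `(6,2)` (i.e. `H_t(ω₁) = 6 − 4t`,
`H_t(ω₂) = 2 + 2t`, `t ∈ [0,1]`), the values of `V` and `V₁` are as tabulated, and the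
concave function `W(x) = min(x/2, 2)` majorizes `V₁` yet `W(2) = 1 < 6/5 = V(2)`; hence
`V` is not the smallest concave majorant of `V₁`. -/
theorem stmt_19 :
    let Gs : Set (Bool → ℝ) := {fun _ => 2}
    let Hs : Set (Bool → ℝ) :=
      {h | ∃ t ∈ Set.Icc (0 : ℝ) 1, h = fun b => if b then 2 + 2 * t else 6 - 4 * t}
    let W : ℝ → ℝ := fun x => min (x / 2) 2
    (∀ x : ℝ, 0 ≤ x → x < 5 / 2 → QH.V QH.muTwo Gs Hs x = 3 * x / 5) ∧
    (∀ x : ℝ, 5 / 2 ≤ x → x < 4 → QH.V QH.muTwo Gs Hs x = x / 3 + 2 / 3) ∧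
    (∀ x : ℝ, 4 ≤ x → QH.V QH.muTwo Gs Hs x = 2) ∧
    (∀ x : ℝ, 0 ≤ x → x < 2 → QH.V1 QH.muTwo Gs Hs x = 0) ∧
    (∀ x : ℝ, 2 ≤ x → x < 4 → QH.V1 QH.muTwo Gs Hs x = 1) ∧
    (∀ x : ℝ, 4 ≤ x → QH.V1 QH.muTwo Gs Hs x = 2) ∧
    ConcaveOn ℝ Set.univ W ∧
    (∀ x : ℝ, 0 ≤ x → QH.V1 QH.muTwo Gs Hs x ≤ W x) ∧
    W 2 = 1 ∧ QH.V QH.muTwo Gs Hs 2 = 6 / 5 ∧ W 2 < QH.V QH.muTwo Gs Hs 2 := by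
  intro Gs Hs W
  have hV2 : QH.V QH.muTwo Gs Hs 2 = 6 / 5 :=
    (QH.V_of_lt_five_halves (x := 2) (by norm_num) (by norm_num)).trans (by norm_num)
  have hW2 : W 2 = 1 := by norm_num [W]
  exact ⟨fun _ => QH.V_of_lt_five_halves, fun _ => QH.V_of_mem_Ico, fun _ => QH.V_of_four_le,
    fun _ => QH.V1_of_lt_two, fun _ => QH.V1_of_mem_Ico, fun _ => QH.V1_of_four_le,
    concaveOn_min_half_two, fun _ => QH.V1_le_min, hW2, hV2, by rw [hW2, hV2]; norm_num⟩
end
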